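/- In the polynomial ring ℂ[x, y, z, w] (the multivariate polynomial ring over ℂ in four variables), the radical of the ideal generated by w, (x²+y²+z²)·x, (x²+y²+z²)·y, and (x²+y²+z²)·z equals the ideal generated by w and x² + y² + z². -/

import Mathlib

/-!
Write `q = x² + y² + z²`. The ideal `(w, q)` is prime: it is the preimage of `(q)` under setting
`w = 0`, and `q`, a monic quadratic in `x` over `ℂ[y, z]`, is irreducible because `-(y² + z²)` is
not a square (a square root would be linear in `y`, forcing `z² = 0`). It contains the given ideal,
and `q² = (qx)x + (qy)y + (qz)z` puts it inside the radical.
-/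

open MvPolynomial

namespace Polynomial

variable {R : Type*} [CommRing R] [IsDomain R]

theorem eq_zero_of_sq_eq_neg_X_sq_add_C (h2 : (2 : R) ≠ 0) {a : R} {s : R[X]}
    (hs : s ^ 2 = -(X ^ 2 + C a)) : a = 0 := by
  have hdeg : s.natDegree ≤ 1 := by
    have := congrArg natDegree hs
    rw [natDegree_pow, natDegree_neg, natDegree_X_pow_add_C] at this
    omega
  obtain ⟨u, v, rfl⟩ : ∃ u v, s = C u * X + C v := ⟨_, _, eq_X_add_C_of_natDegree_le_one hdeg⟩
  have hexp : (C u * X + C v) ^ 2 + (X ^ 2 + C a)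
      = C (u ^ 2 + 1) * X ^ 2 + C (2 * u * v) * X + C (v ^ 2 + a) := by
    simp only [map_add, map_mul, map_pow, map_one, map_ofNat]; ring
  have hzero : C (u ^ 2 + 1) * X ^ 2 + C (2 * u * v) * X + C (v ^ 2 + a) = 0 := by
    rw [← hexp, hs, neg_add_cancel]
  have hcoeff (n : ℕ) := congrArg (coeff · n) hzero
  simp only [coeff_add, coeff_C_mul, coeff_X_pow, coeff_X, coeff_C, coeff_zero] at hcoeff
  have hu : u ^ 2 + 1 = 0 := by simpa using hcoeff 2
  have huv : 2 * u * v = 0 := by simpa using hcoeff 1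
  have hva : v ^ 2 + a = 0 := by simpa using hcoeff 0
  obtain rfl : v = 0 := by
    have hu0 : u ≠ 0 := by rintro rfl; simp at hu
    simpa [h2, hu0] using huv
  simpa using hva

theorem irreducible_X_sq_add_C {a : R} (ha : ∀ r : R, r ^ 2 ≠ -a) :
    Irreducible (X ^ 2 + C a) := by
  have hmon : (X ^ 2 + C a).Monic := monic_X_pow_add_C a two_ne_zero
  rw [hmon.irreducible_iff_roots_eq_zero_of_degree_le_three (by simp) (by simp)]
  refine Multiset.eq_zero_of_forall_notMem fun r hr ↦ ha r ?_
  rw [mem_roots hmon.ne_zero, IsRoot, eval_add, eval_pow, eval_X, eval_C] at hr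
  exact eq_neg_of_add_eq_zero_left hr

end Polynomial

namespace MvPolynomial

section killCompl

variable {R σ τ : Type*} [CommRing R] {f : σ → τ}

theorem killCompl_X_of_notMem_range (hf : f.Injective) {i : τ} (hi : i ∉ Set.range f) :
    killCompl hf (X i : MvPolynomial τ R) = 0 := by
  simp [killCompl, hi]

theorem sub_rename_killCompl_mem_span_X (hf : f.Injective) (p : MvPolynomial τ R) :
    p - rename f (killCompl hf p) ∈ Ideal.span (X '' (Set.range f)ᶜ) := by
  induction p using induction_on with
  | C a => simp
  | add p q hp hq => simpa [add_sub_add_comm] using add_mem hp hq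
  | mul_X p i hp =>
    have hXi : (X i : MvPolynomial τ R) - rename f (killCompl hf (X i)) ∈
        Ideal.span (X '' (Set.range f)ᶜ) := by
      by_cases hi : i ∈ Set.range f
      · obtain ⟨j, rfl⟩ := hi
        rw [← rename_X f j, killCompl_rename_app, sub_self]
        exact zero_mem _
      · rw [killCompl_X_of_notMem_range hf hi, map_zero, sub_zero]
        exact Ideal.subset_span ⟨i, hi, rfl⟩
    rw [map_mul, map_mul, show p * X i - rename f (killCompl hf p) * rename f (killCompl hf (X i))
      = (p - rename f (killCompl hf p)) * X i
        + rename f (killCompl hf p) * (X i - rename f (killCompl hf (X i))) by ring]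
    exact add_mem (Ideal.mul_mem_right _ _ hp) (Ideal.mul_mem_left _ _ hXi)

theorem ker_killCompl (hf : f.Injective) :
    RingHom.ker (killCompl hf : MvPolynomial τ R →ₐ[R] MvPolynomial σ R) =
      Ideal.span (X '' (Set.range f)ᶜ) := by
  apply le_antisymm
  · intro p hp
    simpa [RingHom.mem_ker.1 hp] using sub_rename_killCompl_mem_span_X hf p
  · rw [Ideal.span_le]
    rintro _ ⟨i, hi, rfl⟩
    exact killCompl_X_of_notMem_range hf hi

theorem isPrime_map_rename_sup_span_X (hf : f.Injective) {P : Ideal (MvPolynomial σ R)}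
    (hP : P.IsPrime) :
    (P.map (rename f) ⊔ Ideal.span (X '' (Set.range f)ᶜ)).IsPrime := by
  have hsurj : Function.Surjective (killCompl hf : MvPolynomial τ R →ₐ[R] MvPolynomial σ R) :=
    fun p ↦ ⟨rename f p, killCompl_rename_app hf p⟩
  have hmap : (P.map (rename f)).map (killCompl hf) = P := by
    rw [Ideal.map_mapₐ, killCompl_comp_rename]
    exact P.map_id
  rw [← ker_killCompl hf, ← Ideal.comap_map_of_surjective' _ hsurj, hmap]
  exact hP.comap _

end killCompl

section SumOfThreeSquares

variable {R : Type*} [CommRing R] [IsDomain R]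

theorem sq_ne_neg_X_sq_add_X_sq (h2 : (2 : R) ≠ 0) (r : MvPolynomial (Fin 2) R) :
    r ^ 2 ≠ -(X 0 ^ 2 + X 1 ^ 2) := by
  intro hr
  have h2' : (2 : MvPolynomial (Fin 1) R) ≠ 0 := by
    rw [← map_ofNat C 2]
    exact (C_injective _ _).ne_iff' (map_zero _) |>.2 h2
  refine pow_ne_zero 2 (X_ne_zero (0 : Fin 1)) <|
    Polynomial.eq_zero_of_sq_eq_neg_X_sq_add_C h2' (s := finSuccEquiv R 1 r) ?_
  rw [← map_pow, hr, map_neg, map_add, map_pow, map_pow, finSuccEquiv_X_zero,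
    show (1 : Fin 2) = Fin.succ 0 from rfl, finSuccEquiv_X_succ, Polynomial.C_pow]

theorem prime_X_sq_add_X_sq_add_X_sq [UniqueFactorizationMonoid R] (h2 : (2 : R) ≠ 0) :
    Prime (X 0 ^ 2 + X 1 ^ 2 + X 2 ^ 2 : MvPolynomial (Fin 3) R) := by
  rw [← UniqueFactorizationMonoid.irreducible_iff_prime,
    ← MulEquiv.irreducible_iff (finSuccEquiv R 2).toMulEquiv]
  convert Polynomial.irreducible_X_sq_add_C (sq_ne_neg_X_sq_add_X_sq h2)
  change finSuccEquiv R 2 _ = _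
  rw [map_add, map_add, map_pow, map_pow, map_pow, finSuccEquiv_X_zero,
    show (1 : Fin 3) = Fin.succ 0 from rfl, show (2 : Fin 3) = Fin.succ 1 from rfl,
    finSuccEquiv_X_succ, finSuccEquiv_X_succ, Polynomial.C_add, Polynomial.C_pow,
    Polynomial.C_pow, add_assoc]

theorem isPrime_span_X_three_X_sq_add_X_sq_add_X_sq [UniqueFactorizationMonoid R]
    (h2 : (2 : R) ≠ 0) :
    (Ideal.span {X 3, X 0 ^ 2 + X 1 ^ 2 + X 2 ^ 2} : Ideal (MvPolynomial (Fin 4) R)).IsPrime := by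
  have hP := (Ideal.span_singleton_prime (prime_X_sq_add_X_sq_add_X_sq h2).ne_zero).2
    (prime_X_sq_add_X_sq_add_X_sq h2)
  have hcompl : (Set.range (Fin.castSucc : Fin 3 → Fin 4))ᶜ = {3} := by
    ext i; fin_cases i <;> simp
  convert isPrime_map_rename_sup_span_X (Fin.castSucc_injective 3) hP using 1
  rw [Ideal.map_span, Set.image_singleton, hcompl, Set.image_singleton, Ideal.span_insert,
    sup_comm]
  simp

end SumOfThreeSquares

end MvPolynomial

/-- Example 3.2, ideal-theoretic form: in `ℂ[x, y, z, w]` (with `x = X 0`, `y = X 1`,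
`z = X 2`, `w = X 3`), the radical of the ideal
`(w, (x² + y² + z²) x, (x² + y² + z²) y, (x² + y² + z²) z)` equals
`(w, x² + y² + z²)`. -/
theorem radical_jacobian_ideal_w_sq_add_quadric_sq :
    (Ideal.span {(X 3 : MvPolynomial (Fin 4) ℂ),
        ((X 0) ^ 2 + (X 1) ^ 2 + (X 2) ^ 2) * X 0,
        ((X 0) ^ 2 + (X 1) ^ 2 + (X 2) ^ 2) * X 1,
        ((X 0) ^ 2 + (X 1) ^ 2 + (X 2) ^ 2) * X 2}).radical =
      Ideal.span {(X 3 : MvPolynomial (Fin 4) ℂ),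
        (X 0) ^ 2 + (X 1) ^ 2 + (X 2) ^ 2} := by
  set q : MvPolynomial (Fin 4) ℂ := X 0 ^ 2 + X 1 ^ 2 + X 2 ^ 2
  set I := Ideal.span {X 3, q * X 0, q * X 1, q * X 2}
  have hq : q ∈ Ideal.span {X 3, q} := Ideal.subset_span (by simp)
  have hle : I ≤ Ideal.span {X 3, q} := by
    simp only [I, Ideal.span_le, Set.insert_subset_iff, Set.singleton_subset_iff, SetLike.mem_coe]
    exact ⟨Ideal.subset_span (by simp), Ideal.mul_mem_right _ _ hq,
      Ideal.mul_mem_right _ _ hq, Ideal.mul_mem_right _ _ hq⟩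
  refine le_antisymm ((Ideal.radical_mono hle).trans
    (isPrime_span_X_three_X_sq_add_X_sq_add_X_sq two_ne_zero).radical.le) ?_
  have hq_sq : q ^ 2 = q * X 0 * X 0 + q * X 1 * X 1 + q * X 2 * X 2 := by ring
  simp only [Ideal.span_le, Set.insert_subset_iff, Set.singleton_subset_iff, SetLike.mem_coe]
  refine ⟨Ideal.le_radical (Ideal.subset_span (by simp)), 2, ?_⟩
  rw [hq_sq]
  exact add_mem (add_mem (Ideal.mul_mem_right _ _ (Ideal.subset_span (by simp)))
    (Ideal.mul_mem_right _ _ (Ideal.subset_span (by simp))))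
    (Ideal.mul_mem_right _ _ (Ideal.subset_span (by simp)))
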